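/- arXiv:1903.04405 — 2 statements merged into one kernel-verified Lean document; each statement's English description precedes it below -/
import Mathlib

section
/- Let 0 < α < 1, n ∈ ℕ, and x ∈ ℝⁿ. The function z ↦ (1−α)‖x−z‖₂² + α‖z‖₁ on ℝⁿ has a unique minimizer z* whose i-th component equals max(1 − α/(2(1−α)|xᵢ|), 0) · xᵢ when xᵢ ≠ 0, and equals 0 when xᵢ = 0. -/
noncomputable def st (α a : ℝ) : ℝ :=
  if a = 0 then 0 else max (1 - α / (2 * (1 - α) * |a|)) 0 * a

lemma key (α a t : ℝ) (hα0 : 0 < α) (hα1 : α < 1) :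
    (1 - α) * (a - st α a) ^ 2 + α * |st α a| + (1 - α) * (t - st α a) ^ 2 ≤
      (1 - α) * (a - t) ^ 2 + α * |t| := by
  have hc : (0:ℝ) < 1 - α := by linarith
  rcases eq_or_ne a 0 with ha | ha
  · simp only [st, ha, if_true, abs_zero, mul_zero, sub_zero, zero_sub]
    nlinarith [abs_nonneg t]
  · have hab : 0 < |a| := abs_pos.2 ha
    set β : ℝ := α / (2 * (1 - α)) with hβdef
    have hβpos : 0 < β := by positivity
    have hβ : β * (2 * (1 - α)) = α := by rw [hβdef]; field_simp
    have hβ2 : 2 * (1 - α) * β ^ 2 = α * β := by nlinarith [hβ]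
    rcases le_or_gt (1 - α / (2 * (1 - α) * |a|)) 0 with hm | hm
    · have hst : st α a = 0 := by simp [st, ha, max_eq_right hm]
      rw [hst, abs_zero]
      have h2 : 2 * (1 - α) * |a| ≤ α :=
        (one_le_div (by positivity : (0:ℝ) < 2 * (1 - α) * |a|)).1 (by linarith)
      have hat : a * t ≤ |a| * |t| := (le_abs_self _).trans (le_of_eq (abs_mul a t))
      nlinarith [abs_nonneg t, mul_nonneg (sub_nonneg.2 h2) (abs_nonneg t), mul_le_mul_of_nonneg_left hat (by linarith : (0:ℝ) ≤ 2 * (1 - α))]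
    · have hst : st α a = (1 - α / (2 * (1 - α) * |a|)) * a := by
        simp [st, ha, max_eq_left hm.le]
      have hlt : α < 2 * (1 - α) * |a| :=
        (div_lt_one (by positivity : (0:ℝ) < 2 * (1 - α) * |a|)).1 (by linarith)
      rcases lt_or_gt_of_ne ha with hneg | hpos
      · have habs : |a| = -a := abs_of_neg hneg
        rw [habs] at hst hlt
        have hs : st α a = a + β := by
          rw [hst, hβdef]; field_simp; ring
        have hsneg : a + β < 0 := by nlinarith
        rw [hs, abs_of_neg hsneg]
        nlinarith [neg_abs_le t, mul_nonneg hα0.le (by linarith [neg_abs_le t] : (0:ℝ) ≤ |t| + t)]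
      · have habs : |a| = a := abs_of_pos hpos
        rw [habs] at hst hlt
        have hs : st α a = a - β := by
          rw [hst, hβdef]; field_simp
        have hspos : 0 < a - β := by nlinarith
        rw [hs, abs_of_pos hspos]
        nlinarith [le_abs_self t, mul_nonneg hα0.le (by linarith [le_abs_self t] : (0:ℝ) ≤ |t| - t)]

/-- For `0 < α < 1`, `n ∈ ℕ` and `x ∈ ℝⁿ`, the function
`z ↦ (1−α)‖x−z‖₂² + α‖z‖₁` has a unique minimizer `z*` whose `i`-th component is
`max(1 − α/(2(1−α)|xᵢ|), 0) · xᵢ` when `xᵢ ≠ 0`, and `0` when `xᵢ = 0`. -/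
theorem stmt1 (α : ℝ) (hα0 : 0 < α) (hα1 : α < 1) (n : ℕ) (x : Fin n → ℝ) :
    let f : (Fin n → ℝ) → ℝ := fun z => (1 - α) * ∑ i, (x i - z i) ^ 2 + α * ∑ i, |z i|
    ∃ zstar : Fin n → ℝ,
      IsMinOn f Set.univ zstar ∧
      (∀ z : Fin n → ℝ, IsMinOn f Set.univ z → z = zstar) ∧
      ∀ i : Fin n,
        zstar i = if x i = 0 then 0 else max (1 - α / (2 * (1 - α) * |x i|)) 0 * x i := by
  intro f
  have hc : (0:ℝ) < 1 - α := by linarith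
  set s : Fin n → ℝ := fun i => st α (x i) with hs
  have hkey : ∀ z : Fin n → ℝ,
      f s + (1 - α) * ∑ i, (z i - s i) ^ 2 ≤ f z := by
    intro z
    have h := Finset.sum_le_sum (s := Finset.univ)
      (f := fun i => (1 - α) * (x i - s i) ^ 2 + α * |s i| + (1 - α) * (z i - s i) ^ 2)
      (g := fun i => (1 - α) * (x i - z i) ^ 2 + α * |z i|)
      (fun i _ => key α (x i) (z i) hα0 hα1)
    simp only [Finset.sum_add_distrib, ← Finset.mul_sum] at h
    simp only [f]
    linarith
  have hsq : ∀ z : Fin n → ℝ, (0:ℝ) ≤ ∑ i, (z i - s i) ^ 2 :=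
    fun z => Finset.sum_nonneg fun i _ => sq_nonneg _
  refine ⟨s, ?_, ?_, ?_⟩
  · refine isMinOn_iff.2 fun z _ => ?_
    nlinarith [hkey z, hsq z]
  · intro z hz
    have h1 : f z ≤ f s := isMinOn_iff.1 hz s (Set.mem_univ _)
    have h2 := hkey z
    have h3 : ∑ i, (z i - s i) ^ 2 ≤ 0 := by nlinarith
    have h4 : ∀ i ∈ Finset.univ, (z i - s i) ^ 2 = 0 := by
      intro i hi
      have := (Finset.sum_eq_zero_iff_of_nonneg (fun i _ => sq_nonneg (z i - s i))).1
        (le_antisymm h3 (hsq z)) i hi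
      exact this
    funext i
    have := h4 i (Finset.mem_univ i)
    have := pow_eq_zero_iff (n := 2) (by norm_num) |>.1 this
    linarith [sub_eq_zero.1 this]
  · intro i
    simp [hs, st]
end

section
/- Let 0 < α < 1, n ∈ ℕ, and x ∈ ℝⁿ. Then the infimum over z ∈ ℝⁿ of (1−α)‖x−z‖₂² + α‖z‖₁ equals the sum over i of Φ_α(xᵢ), where Φ_α is the scalar Huber function: Φ_α(t) = (1−α)t² if |t| ≤ α/(2(1−α)) and Φ_α(t) = α|t| − α²/(4(1−α)) otherwise. -/
noncomputable def softT (α a : ℝ) : ℝ :=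
  if |a| ≤ α / (2 * (1 - α)) then 0
  else if 0 ≤ a then a - α / (2 * (1 - α)) else a + α / (2 * (1 - α))

lemma huber_le (α a t : ℝ) (hα0 : 0 < α) (hα1 : α < 1) :
    (if |a| ≤ α / (2 * (1 - α)) then (1 - α) * a ^ 2
      else α * |a| - α ^ 2 / (4 * (1 - α))) ≤ (1 - α) * (a - t) ^ 2 + α * |t| := by
  have h1 : (0:ℝ) < 1 - α := by linarith
  have h2 : (0:ℝ) < 2 * (1 - α) := by linarith
  set c := α / (2 * (1 - α)) with hc
  have hc0 : 0 < c := by positivity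
  have hαc : α = 2 * (1 - α) * c := by rw [hc]; field_simp
  have hd : α ^ 2 / (4 * (1 - α)) = (1 - α) * c ^ 2 := by
    rw [hc]; field_simp; ring
  split_ifs with h
  · have h3 : a * t ≤ |a| * |t| := by rw [← abs_mul]; exact le_abs_self _
    have h4 : |a| * |t| ≤ c * |t| := mul_le_mul_of_nonneg_right h (abs_nonneg t)
    nlinarith [mul_nonneg h1.le (sub_nonneg.mpr (h3.trans h4)),
      mul_nonneg h1.le (sq_nonneg t)]
  · push_neg at h
    rw [hd]
    have h5 : |a| - |t| ≤ |a - t| := abs_sub_abs_le_abs_sub a t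
    have h6 : 0 ≤ (|a - t| - c) ^ 2 := sq_nonneg _
    have h7 : (1 - α) * (a - t) ^ 2 = (1 - α) * |a - t| ^ 2 := by rw [sq_abs]
    rw [h7, hαc]
    nlinarith [mul_nonneg h1.le h6, mul_nonneg (mul_pos h1 hc0).le (sub_nonneg.mpr
      (by linarith : |a| ≤ |a - t| + |t|))]

lemma huber_eq (α a : ℝ) (hα0 : 0 < α) (hα1 : α < 1) :
    (1 - α) * (a - softT α a) ^ 2 + α * |softT α a| =
      (if |a| ≤ α / (2 * (1 - α)) then (1 - α) * a ^ 2
        else α * |a| - α ^ 2 / (4 * (1 - α))) := by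
  have h1 : (0:ℝ) < 1 - α := by linarith
  have h2 : (0:ℝ) < 2 * (1 - α) := by linarith
  have hc : 0 < α / (2 * (1 - α)) := by positivity
  unfold softT
  split_ifs with h h0
  · simp
  · -- 0 ≤ a, |a| > c so a > c
    have ha : |a| = a := abs_of_nonneg h0
    rw [ha] at h; push_neg at h
    have : 0 ≤ a - α / (2 * (1 - α)) := by linarith
    rw [abs_of_nonneg this, ha]
    field_simp
    ring
  · push_neg at h0
    have ha : |a| = -a := abs_of_neg h0
    rw [ha] at h ⊢; push_neg at h
    have : a + α / (2 * (1 - α)) ≤ 0 := by linarith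
    rw [abs_of_nonpos this]
    field_simp
    ring

/-- For `0 < α < 1`, `n ∈ ℕ` and `x ∈ ℝⁿ`, the infimum over `z ∈ ℝⁿ` of
`(1−α)‖x−z‖₂² + α‖z‖₁` equals `∑ i, Φ_α(xᵢ)` where `Φ_α` is the scalar Huber function. -/
theorem stmt4 (α : ℝ) (hα0 : 0 < α) (hα1 : α < 1) (n : ℕ) (x : Fin n → ℝ) :
    sInf (Set.range fun z : Fin n → ℝ =>
        (1 - α) * ∑ i, (x i - z i) ^ 2 + α * ∑ i, |z i|) =
      ∑ i, (if |x i| ≤ α / (2 * (1 - α)) then (1 - α) * (x i) ^ 2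
            else α * |x i| - α ^ 2 / (4 * (1 - α))) := by
  set Φ : ℝ → ℝ := fun a =>
    (if |a| ≤ α / (2 * (1 - α)) then (1 - α) * a ^ 2
      else α * |a| - α ^ 2 / (4 * (1 - α))) with hΦ
  have hsep : ∀ z : Fin n → ℝ,
      (1 - α) * ∑ i, (x i - z i) ^ 2 + α * ∑ i, |z i| =
        ∑ i, ((1 - α) * (x i - z i) ^ 2 + α * |z i|) := by
    intro z
    rw [Finset.mul_sum, Finset.mul_sum, ← Finset.sum_add_distrib]
  have hlb : ∀ z : Fin n → ℝ,
      (∑ i, Φ (x i)) ≤ (1 - α) * ∑ i, (x i - z i) ^ 2 + α * ∑ i, |z i| := by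
    intro z
    rw [hsep]
    exact Finset.sum_le_sum fun i _ => huber_le α (x i) (z i) hα0 hα1
  apply le_antisymm
  · apply csInf_le
    · exact ⟨∑ i, Φ (x i), fun y ⟨z, hz⟩ => hz ▸ hlb z⟩
    · refine ⟨fun i => softT α (x i), ?_⟩
      show (1 - α) * ∑ i, (x i - softT α (x i)) ^ 2 + α * ∑ i, |softT α (x i)| = _
      rw [hsep]
      exact Finset.sum_congr rfl fun i _ => huber_eq α (x i) hα0 hα1
  · exact le_csInf ⟨_, ⟨0, rfl⟩⟩ fun y ⟨z, hz⟩ => hz ▸ hlb z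
end
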